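/- (Theorem 1, σ > 0 case.) Suppose 0 ≤ ν̄ < c and σ > 0, and set λ = 2c/σ² and ρ = ν̄/c. Let μ_λ be the exponential distribution with rate λ on [0,∞), let G be the probability measure on (0,∞) with density x ↦ ν((x,∞))/ν̄ (any fixed probability measure when ν̄ = 0), and define the probability measure W = μ_λ ∗ ( Σ_{n=0}^∞ (1 − ρ) ρⁿ (μ_λ ∗ G)^{∗n} ), i.e. the law of X₀ + Σ_{n=1}^N (X_n + Y_n) where N is geometric with P[N = n] = (1 − ρ)ρⁿ, the X_i are exponential(λ), the Y_i have law G, and all are independent. Then for every α > 0, ∫ e^{−αx} W(dx) = α(c − ν̄)/φ(α). -/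

import Mathlib

/-!
The Laplace transform `α ↦ ∫ e^{-αx} dμ` turns convolution into multiplication and the
geometric mixture of convolution powers into a geometric series. The exponential law has
transform `λ/(λ+α)`, and by the layer-cake formula the integrated-tail law `G` has transform
`(αν̄)⁻¹ ∫ (1 - e^{-αx}) ν(dx)`, so `ν̄ α Ĝ(α)` is exactly the jump part of `φ(α)`. Summing the
series gives `Ŵ(α) = m(1-ρ)/(1-ρ m Ĝ(α))` with `m = λ/(λ+α)`, which is `α(c-ν̄)/φ(α)` once the
denominators are cleared.
-/

open MeasureTheory Set Real

/-- The `n`-fold convolution power of a measure on `ℝ`, with `H^{∗0} = δ₀`. -/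
noncomputable def convPow (H : Measure ℝ) : ℕ → Measure ℝ
  | 0 => Measure.dirac 0
  | n + 1 => Measure.conv (convPow H n) H

/-- The exponential distribution with rate `l > 0`, having density `l e^{−lx}`
on `[0,∞)`. -/
noncomputable def expMeasure (l : ℝ) : Measure ℝ :=
  volume.withDensity
    (fun x => ENNReal.ofReal (if 0 ≤ x then l * Real.exp (-(l * x)) else 0))

open scoped ENNReal

/-- Valued in `ℝ≥0∞`, so that it is multiplicative under convolution and additive over
`Measure.sum` with no integrability side conditions. -/
noncomputable def laplaceTransform (μ : Measure ℝ) (α : ℝ) : ℝ≥0∞ :=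
  ∫⁻ x, ENNReal.ofReal (exp (-(α * x))) ∂μ

noncomputable def integratedTailMeasure (ν : Measure ℝ) (a : ℝ) : Measure ℝ :=
  volume.withDensity fun x => if 0 < x then ν (Ioi x) / ENNReal.ofReal a else 0

lemma integral_exp_neg_mul_eq_toReal_laplaceTransform (μ : Measure ℝ) (α : ℝ) :
    ∫ x, exp (-(α * x)) ∂μ = (laplaceTransform μ α).toReal :=
  integral_eq_lintegral_of_nonneg_ae (.of_forall fun _ => exp_nonneg _) (by fun_prop)

lemma laplaceTransform_le_measure_univ (μ : Measure ℝ) (hμ : ∀ᵐ x ∂μ, 0 ≤ x) {α : ℝ}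
    (hα : 0 ≤ α) : laplaceTransform μ α ≤ μ univ := by
  rw [← lintegral_one]
  refine lintegral_mono_ae (hμ.mono fun x hx => ?_)
  rw [← ENNReal.ofReal_one]
  exact ENNReal.ofReal_le_ofReal (exp_le_one_iff.mpr (by nlinarith))

lemma laplaceTransform_conv (μ ν : Measure ℝ) [SFinite ν] (α : ℝ) :
    laplaceTransform (μ ∗ ν) α = laplaceTransform μ α * laplaceTransform ν α := by
  have hsplit (x y : ℝ) : ENNReal.ofReal (exp (-(α * (x + y))))
      = ENNReal.ofReal (exp (-(α * x))) * ENNReal.ofReal (exp (-(α * y))) := by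
    rw [← ENNReal.ofReal_mul (exp_nonneg _), ← exp_add]
    ring_nf
  simp only [laplaceTransform, Measure.lintegral_conv (by fun_prop : Measurable fun x : ℝ =>
    ENNReal.ofReal (exp (-(α * x)))), hsplit]
  simp_rw [lintegral_const_mul _ (by fun_prop : Measurable fun y : ℝ =>
    ENNReal.ofReal (exp (-(α * y))))]
  exact lintegral_mul_const'' _ (by fun_prop)

lemma laplaceTransform_dirac_zero (α : ℝ) : laplaceTransform (Measure.dirac 0) α = 1 := by
  simp [laplaceTransform]

instance sFinite_convPow (H : Measure ℝ) [SFinite H] (n : ℕ) : SFinite (convPow H n) := by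
  induction n with
  | zero => rw [convPow]; infer_instance
  | succ n ih => rw [convPow]; infer_instance

lemma laplaceTransform_convPow (H : Measure ℝ) [SFinite H] (α : ℝ) (n : ℕ) :
    laplaceTransform (convPow H n) α = laplaceTransform H α ^ n := by
  induction n with
  | zero => rw [convPow, pow_zero, laplaceTransform_dirac_zero]
  | succ n ih => rw [convPow, laplaceTransform_conv, ih, pow_succ]

lemma laplaceTransform_sum_smul (μ : ℕ → Measure ℝ) (a : ℕ → ℝ≥0∞) (α : ℝ) :
    laplaceTransform (Measure.sum fun n => a n • μ n) α
      = ∑' n, a n * laplaceTransform (μ n) α := by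
  simp only [laplaceTransform, lintegral_sum_measure, lintegral_smul_measure, smul_eq_mul]

lemma laplaceTransform_geometric_mixture (H : Measure ℝ) [SFinite H] {α ρ h : ℝ}
    (hρ : 0 ≤ ρ) (hh : 0 ≤ h) (hρh : ρ * h < 1)
    (hH : laplaceTransform H α = ENNReal.ofReal h) :
    laplaceTransform (Measure.sum fun n : ℕ =>
        ENNReal.ofReal ((1 - ρ) * ρ ^ n) • convPow H n) α
      = ENNReal.ofReal ((1 - ρ) / (1 - ρ * h)) := by
  have hterm (n : ℕ) : ENNReal.ofReal ((1 - ρ) * ρ ^ n) * laplaceTransform (convPow H n) α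
      = ENNReal.ofReal (1 - ρ) * ENNReal.ofReal (ρ * h) ^ n := by
    rw [laplaceTransform_convPow, hH, ENNReal.ofReal_mul' (by positivity), mul_assoc,
      ENNReal.ofReal_mul hρ, mul_pow, ENNReal.ofReal_pow hρ]
  rw [laplaceTransform_sum_smul, tsum_congr hterm, ENNReal.tsum_mul_left,
    ENNReal.tsum_geometric, ← ENNReal.ofReal_one, ← ENNReal.ofReal_sub _ (by positivity),
    ← ENNReal.ofReal_inv_of_pos (by linarith), ← ENNReal.ofReal_mul' (by
      have : 0 < 1 - ρ * h := by linarith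
      positivity), div_eq_mul_inv]

instance sFinite_expMeasure (l : ℝ) : SFinite (expMeasure l) := by
  rw [expMeasure]; infer_instance

lemma laplaceTransform_expMeasure {l α : ℝ} (hl : 0 ≤ l) (hlα : 0 < l + α) :
    laplaceTransform (expMeasure l) α = ENNReal.ofReal (l / (l + α)) := by
  have hdens : (fun x => ENNReal.ofReal (if 0 ≤ x then l * exp (-(l * x)) else 0)
        * ENNReal.ofReal (exp (-(α * x))))
      = (Ici 0).indicator fun x => ENNReal.ofReal (l * exp (-(l + α) * x)) := by
    ext x
    by_cases hx : 0 ≤ x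
    · rw [if_pos hx, indicator_of_mem (mem_Ici.mpr hx), ← ENNReal.ofReal_mul (by positivity),
        mul_assoc, ← exp_add]
      ring_nf
    · simp [hx]
  have hint : IntegrableOn (fun x => l * exp (-(l + α) * x)) (Ioi 0) :=
    (exp_neg_integrableOn_Ioi 0 hlα).const_mul l
  have hmeas : Measurable fun x : ℝ => if 0 ≤ x then l * exp (-(l * x)) else 0 :=
    Measurable.ite measurableSet_Ici (by fun_prop) measurable_const
  rw [laplaceTransform, expMeasure, lintegral_withDensity_eq_lintegral_mul _
    hmeas.ennreal_ofReal (by fun_prop)]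
  simp only [Pi.mul_apply]
  rw [hdens, lintegral_indicator measurableSet_Ici, ← setLIntegral_congr Ioi_ae_eq_Ici,
    ← ofReal_integral_eq_lintegral_ofReal hint (.of_forall fun _ => by positivity),
    integral_const_mul, integral_exp_mul_Ioi (by linarith)]
  congr 1
  field_simp
  simp

section IntegratedTail

variable {α : ℝ}

lemma integral_mul_exp_neg_mul (α y : ℝ) :
    ∫ t in (0 : ℝ)..y, α * exp (-(α * t)) = 1 - exp (-(α * y)) := by
  have hderiv (t : ℝ) : HasDerivAt (fun t => -exp (-(α * t))) (α * exp (-(α * t))) t := by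
    have h := ((((hasDerivAt_id t).const_mul α).neg).exp).neg
    simp only [id, mul_one, mul_neg, neg_neg] at h
    rwa [mul_comm] at h
  rw [intervalIntegral.integral_eq_sub_of_hasDerivAt (fun t _ => hderiv t)
    (by apply Continuous.intervalIntegrable; fun_prop)]
  simp only [mul_zero, neg_zero, exp_zero, sub_neg_eq_add]
  ring

/-- The layer-cake formula for `y ↦ 1 - e^{-αy}`, whose derivative is `α e^{-αy}`. -/
lemma setLIntegral_one_sub_exp_neg_mul (ν : Measure ℝ) (hα : 0 < α) :
    ∫⁻ y in Ioi 0, ENNReal.ofReal (1 - exp (-(α * y))) ∂ν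
      = ENNReal.ofReal α * ∫⁻ x in Ioi 0, ν (Ioi x) * ENNReal.ofReal (exp (-(α * x))) := by
  have hlayer := lintegral_comp_eq_lintegral_meas_lt_mul (ν.restrict (Ioi 0)) (f := id)
    (g := fun t => α * exp (-(α * t)))
    (ae_restrict_of_forall_mem measurableSet_Ioi fun y hy => le_of_lt hy) aemeasurable_id
    (fun t _ => by apply Continuous.intervalIntegrable; fun_prop)
    (.of_forall fun t => by positivity)
  simp only [id, integral_mul_exp_neg_mul] at hlayer
  rw [hlayer, ← lintegral_const_mul' _ _ ENNReal.ofReal_ne_top]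
  refine setLIntegral_congr_fun measurableSet_Ioi fun t ht => ?_
  rw [Measure.restrict_apply' measurableSet_Ioi, ENNReal.ofReal_mul hα.le,
    show {a : ℝ | t < a} ∩ Ioi 0 = Ioi t from inter_eq_left.mpr (Ioi_subset_Ioi (le_of_lt ht))]
  ring

lemma laplaceTransform_integratedTailMeasure (ν : Measure ℝ) (a : ℝ) (hα : 0 < α) :
    ENNReal.ofReal α * laplaceTransform (integratedTailMeasure ν a) α
      = (ENNReal.ofReal a)⁻¹ * ∫⁻ y in Ioi 0, ENNReal.ofReal (1 - exp (-(α * y))) ∂ν := by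
  have htail : Measurable fun x : ℝ => ν (Ioi x) :=
    Antitone.measurable fun _ _ hxy => measure_mono (Ioi_subset_Ioi hxy)
  have hdens : (fun x => (if 0 < x then ν (Ioi x) / ENNReal.ofReal a else 0)
        * ENNReal.ofReal (exp (-(α * x))))
      = (Ioi 0).indicator fun x =>
          (ENNReal.ofReal a)⁻¹ * (ν (Ioi x) * ENNReal.ofReal (exp (-(α * x)))) := by
    ext x
    by_cases hx : 0 < x
    · rw [if_pos hx, indicator_of_mem (mem_Ioi.mpr hx), ENNReal.div_eq_inv_mul, mul_assoc]
    · simp [hx]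
  rw [laplaceTransform, integratedTailMeasure, lintegral_withDensity_eq_lintegral_mul _
    (Measurable.ite measurableSet_Ioi (htail.div_const _) measurable_const) (by fun_prop)]
  simp only [Pi.mul_apply]
  rw [hdens, lintegral_indicator measurableSet_Ioi,
    lintegral_const_mul (f := fun x => ν (Ioi x) * ENNReal.ofReal (exp (-(α * x)))) _
      (htail.mul (by fun_prop)),
    setLIntegral_one_sub_exp_neg_mul ν hα]
  ring

lemma one_sub_exp_neg_nonneg {t : ℝ} (ht : 0 ≤ t) : 0 ≤ 1 - exp (-t) := by
  simpa using exp_le_one_iff.mpr (neg_nonpos.mpr ht)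

lemma one_sub_exp_neg_le (t : ℝ) : 1 - exp (-t) ≤ t := by
  linarith [add_one_le_exp (-t)]

variable {ν : Measure ℝ}

lemma integrableOn_one_sub_exp_neg_mul (hint : IntegrableOn (fun x => x) (Ioi 0) ν)
    (hα : 0 ≤ α) : IntegrableOn (fun y => 1 - exp (-(α * y))) (Ioi 0) ν := by
  refine (hint.const_mul α).mono (by fun_prop) ?_
  filter_upwards [ae_restrict_mem measurableSet_Ioi] with y (hy : 0 < y)
  rw [norm_of_nonneg (one_sub_exp_neg_nonneg (by positivity)), norm_of_nonneg (by positivity)]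
  exact one_sub_exp_neg_le _

lemma setIntegral_one_sub_exp_neg_mul_nonneg (hα : 0 ≤ α) :
    0 ≤ ∫ y in Ioi 0, (1 - exp (-(α * y))) ∂ν :=
  setIntegral_nonneg measurableSet_Ioi fun y (hy : 0 < y) =>
    one_sub_exp_neg_nonneg (by positivity)

lemma setIntegral_one_sub_exp_neg_mul_le (hint : IntegrableOn (fun x => x) (Ioi 0) ν)
    (hα : 0 ≤ α) :
    ∫ y in Ioi 0, (1 - exp (-(α * y))) ∂ν ≤ α * ∫ y in Ioi 0, y ∂ν := by
  rw [← integral_const_mul]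
  exact setIntegral_mono (integrableOn_one_sub_exp_neg_mul hint hα) (hint.const_mul α)
    fun y => one_sub_exp_neg_le _

lemma mul_toReal_laplaceTransform_integratedTailMeasure
    (hint : IntegrableOn (fun x => x) (Ioi 0) ν) {a : ℝ} (ha : 0 < a) (hα : 0 < α) :
    a * α * (laplaceTransform (integratedTailMeasure ν a) α).toReal
      = ∫ y in Ioi 0, (1 - exp (-(α * y))) ∂ν := by
  have h := congrArg ENNReal.toReal (laplaceTransform_integratedTailMeasure ν a hα)
  rw [← ofReal_integral_eq_lintegral_ofReal (integrableOn_one_sub_exp_neg_mul hint hα.le)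
    (ae_restrict_of_forall_mem measurableSet_Ioi fun y (hy : 0 < y) =>
      one_sub_exp_neg_nonneg (by positivity)),
    ENNReal.toReal_mul, ENNReal.toReal_mul, ENNReal.toReal_inv, ENNReal.toReal_ofReal hα.le,
    ENNReal.toReal_ofReal ha.le,
    ENNReal.toReal_ofReal (setIntegral_one_sub_exp_neg_mul_nonneg hα.le)] at h
  field_simp at h ⊢
  linarith

end IntegratedTail

lemma mul_toReal_laplaceTransform_eq_setIntegral {ν G : Measure ℝ}
    (hint : IntegrableOn (fun x => x) (Ioi 0) ν) {νbar : ℝ}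
    (hνbar : νbar = ∫ x in Ioi 0, x ∂ν) (h0 : 0 ≤ νbar)
    (hG : 0 < νbar → G = integratedTailMeasure ν νbar) {α : ℝ} (hα : 0 < α) :
    νbar * α * (laplaceTransform G α).toReal = ∫ y in Ioi 0, (1 - exp (-(α * y))) ∂ν := by
  rcases h0.eq_or_lt with hzero | hpos
  · have hle := setIntegral_one_sub_exp_neg_mul_le hint hα.le
    rw [← hνbar, ← hzero, mul_zero] at hle
    rw [← hzero, zero_mul, zero_mul]
    exact (hle.antisymm (setIntegral_one_sub_exp_neg_mul_nonneg hα.le)).symm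
  · rw [hG hpos]
    exact mul_toReal_laplaceTransform_integratedTailMeasure hint hpos hα

lemma pollaczekKhinchine_algebra {c σ α νbar g : ℝ} (hc : 0 < c) (hσ : 0 < σ) (hα : 0 < α)
    (h0 : 0 ≤ νbar) (h1 : νbar < c) (hg : g ≤ 1) :
    2 * c / σ ^ 2 / (2 * c / σ ^ 2 + α)
        * ((1 - νbar / c) / (1 - νbar / c * (2 * c / σ ^ 2 / (2 * c / σ ^ 2 + α) * g)))
      = α * (c - νbar) / (c * α + σ ^ 2 / 2 * α ^ 2 - νbar * α * g) := by
  have hνg : νbar * g ≤ νbar := mul_le_of_le_one_right h0 hg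
  have hφ : c * α + σ ^ 2 / 2 * α ^ 2 - νbar * α * g ≠ 0 := by nlinarith
  have hD : 2 * c + σ ^ 2 * α - 2 * νbar * g ≠ 0 := by nlinarith
  rw [eq_div_iff hφ]
  field_simp

theorem stmt9_general (ν : Measure ℝ)
    (hint : IntegrableOn (fun x => x) (Ioi 0) ν)
    (νbar : ℝ) (hνbar : νbar = ∫ x in Ioi (0:ℝ), x ∂ν)
    (c σ : ℝ) (hc : 0 < c) (hσ : 0 < σ)
    (h0 : 0 ≤ νbar) (h1 : νbar < c)
    (φ : ℝ → ℝ)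
    (hφ : ∀ α : ℝ, φ α = c * α + σ ^ 2 / 2 * α ^ 2
        - ∫ x in Ioi (0:ℝ), (1 - Real.exp (-(α * x))) ∂ν)
    (lam ρ : ℝ) (hlam : lam = 2 * c / σ ^ 2) (hρ : ρ = νbar / c)
    (G : Measure ℝ) (hG_prob : IsProbabilityMeasure G) (hG0 : G (Iic 0) = 0)
    (hG : 0 < νbar → G = volume.withDensity
        (fun x => if 0 < x then ν (Ioi x) / ENNReal.ofReal νbar else 0))
    (W : Measure ℝ)
    (hW : W = Measure.conv (expMeasure lam)
        (Measure.sum (fun n : ℕ =>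
          (ENNReal.ofReal ((1 - ρ) * ρ ^ n)) •
            convPow (Measure.conv (expMeasure lam) G) n))) :
    ∀ α : ℝ, 0 < α →
      ∫ x, Real.exp (-(α * x)) ∂W = α * (c - νbar) / φ α := by
  intro α hα
  have hlam0 : 0 < lam := by rw [hlam]; positivity
  have hρ0 : 0 ≤ ρ := by rw [hρ]; positivity
  have hρ1 : ρ < 1 := by rw [hρ, div_lt_one hc]; exact h1
  have hG_le : laplaceTransform G α ≤ 1 := by
    simpa using laplaceTransform_le_measure_univ G (measure_mono_null
      (fun x (hx : ¬0 ≤ x) => mem_Iic.mpr (not_le.mp hx).le) hG0) hα.le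
  set g := (laplaceTransform G α).toReal
  have hg := (ENNReal.ofReal_toReal (ne_top_of_le_ne_top ENNReal.one_ne_top hG_le)).symm
  have hg1 : g ≤ 1 := ENNReal.toReal_le_of_le_ofReal zero_le_one (by simpa using hG_le)
  have hm1 : lam / (lam + α) ≤ 1 := div_le_one_of_le₀ (by linarith) (by linarith)
  have hH : laplaceTransform (expMeasure lam ∗ G) α = ENNReal.ofReal (lam / (lam + α) * g) := by
    rw [laplaceTransform_conv, laplaceTransform_expMeasure hlam0.le (by linarith), hg,
      ENNReal.ofReal_mul (by positivity)]
  have hρmg : ρ * (lam / (lam + α) * g) < 1 := by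
    nlinarith [mul_le_one₀ hm1 ENNReal.toReal_nonneg hg1]
  rw [integral_exp_neg_mul_eq_toReal_laplaceTransform, hW, laplaceTransform_conv,
    laplaceTransform_expMeasure hlam0.le (by linarith),
    laplaceTransform_geometric_mixture _ hρ0 (by positivity) hρmg hH,
    ← ENNReal.ofReal_mul (by positivity),
    ENNReal.toReal_ofReal (mul_nonneg (by positivity) (div_nonneg (by linarith) (by linarith))),
    hφ α, ← mul_toReal_laplaceTransform_eq_setIntegral hint hνbar h0 hG hα, hlam, hρ]
  exact pollaczekKhinchine_algebra hc hσ hα h0 h1 hg1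

/-- **Theorem 1, `σ > 0` case.** Suppose `0 ≤ ν̄ < c` and `σ > 0`, and set
`λ = 2c/σ²`, `ρ = ν̄/c`. Let `μ_λ` be the exponential distribution with rate `λ`, `G` the
probability measure on `(0,∞)` with density `x ↦ ν((x,∞))/ν̄` (any fixed probability
measure on `(0,∞)` when `ν̄ = 0`), and
`W = μ_λ ∗ (Σ_{n=0}^∞ (1 − ρ) ρⁿ (μ_λ ∗ G)^{∗n})`, i.e. the law of
`X₀ + Σ_{n=1}^N (X_n + Y_n)` with `N` geometric`(1 − ρ)`, `Xᵢ ∼ exp(λ)`, `Yᵢ ∼ G`, all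
independent. Then for every `α > 0`, `∫ e^{−αx} W(dx) = α(c − ν̄)/φ(α)`. -/
theorem stmt9 (ν : Measure ℝ) (hν : ν (Iic 0) = 0)
    (hint : IntegrableOn (fun x => x) (Ioi 0) ν)
    (νbar : ℝ) (hνbar : νbar = ∫ x in Ioi (0:ℝ), x ∂ν)
    (c σ : ℝ) (hc : 0 < c) (hσ : 0 < σ)
    (h0 : 0 ≤ νbar) (h1 : νbar < c)
    (φ : ℝ → ℝ)
    (hφ : ∀ α : ℝ, φ α = c * α + σ ^ 2 / 2 * α ^ 2
        - ∫ x in Ioi (0:ℝ), (1 - Real.exp (-(α * x))) ∂ν)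
    (lam ρ : ℝ) (hlam : lam = 2 * c / σ ^ 2) (hρ : ρ = νbar / c)
    (G : Measure ℝ) (hG_prob : IsProbabilityMeasure G) (hG0 : G (Iic 0) = 0)
    (hG : 0 < νbar → G = volume.withDensity
        (fun x => if 0 < x then ν (Ioi x) / ENNReal.ofReal νbar else 0))
    (W : Measure ℝ)
    (hW : W = Measure.conv (expMeasure lam)
        (Measure.sum (fun n : ℕ =>
          (ENNReal.ofReal ((1 - ρ) * ρ ^ n)) •
            convPow (Measure.conv (expMeasure lam) G) n))) :
    ∀ α : ℝ, 0 < α →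
      ∫ x, Real.exp (-(α * x)) ∂W = α * (c - νbar) / φ α :=
  stmt9_general ν hint νbar hνbar c σ hc hσ h0 h1 φ hφ lam ρ hlam hρ G hG_prob hG0 hG W hW
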